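/- arXiv:1307.2131 — 4 statements merged into one kernel-verified Lean document; each statement's English description precedes it below -/
import Mathlib

section
/- Let X be a finite abstract simplicial complex. Given an arbitrary assignment of real values v(x) to each simplex x of X, there exists a (unique) valuation μ : S(X) → ℝ with μ(x) = v(x) for every simplex x. Explicitly, μ(A) = Σ_{a ∈ A} μ₀(a), where μ₀ is defined by Möbius inversion so that v(x) = Σ_{a ⊆ x} μ₀(a). -/
/-- An abstract simplicial complex on vertex set `V`: a finite collection of
nonempty finite sets closed under nonempty subsets. -/
def IsComplex {V : Type*} [DecidableEq V] (X : Finset (Finset V)) : Prop :=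
  (∀ a ∈ X, a.Nonempty) ∧ ∀ a ∈ X, ∀ b ⊆ a, b.Nonempty → b ∈ X

/-- `A` is a subcomplex of `X`. -/
def IsSubcomplex {V : Type*} [DecidableEq V] (X A : Finset (Finset V)) : Prop :=
  A ⊆ X ∧ IsComplex A

/-- The simplex generated by a face `x`: all nonempty subsets of `x`. -/
def simplexOf {V : Type*} [DecidableEq V] (x : Finset V) : Finset (Finset V) :=
  x.powerset.erase ∅

/-- The boundary complex of the simplex on `x`: all proper nonempty subsets of `x`. -/
def boundaryOf {V : Type*} [DecidableEq V] (x : Finset V) : Finset (Finset V) :=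
  (x.powerset.erase ∅).erase x

/-!
Uniqueness: removing a face `x` of maximal size from a complex `A` writes `A` as the union of the
complexes `A.erase x` and `simplexOf x`, meeting in `boundaryOf x`; both have fewer faces than `A`,
so by induction a valuation is determined by its values on simplices. Existence: `A ↦ ∑ a ∈ A, μ₀ a`
is a valuation for every `μ₀`, and Möbius inversion on the lattice of subsets of a face chooses
`μ₀` with the prescribed sums over simplices.
-/

open Finset

theorem exists_sum_Iic_eq {𝕜 α : Type*} [Ring 𝕜] [PartialOrder α] [OrderBot α]
    [LocallyFiniteOrder α] [DecidableEq α] (g : α → 𝕜) :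
    ∃ f : α → 𝕜, ∀ x, ∑ y ∈ Iic x, f y = g x := by
  refine ⟨fun a => ∑ b ∈ Iic a, IncidenceAlgebra.mu 𝕜 b a * g b, fun x => ?_⟩
  calc ∑ a ∈ Iic x, ∑ b ∈ Iic a, IncidenceAlgebra.mu 𝕜 b a * g b
      = ∑ b ∈ Iic x, ∑ a ∈ Icc b x, IncidenceAlgebra.mu 𝕜 b a * g b :=
        sum_comm' fun a b => by simp only [mem_Iic, mem_Icc]; grind [le_trans]
    _ = ∑ b ∈ Iic x, (if b = x then 1 else 0) * g b := by
        simp only [← sum_mul, IncidenceAlgebra.sum_Icc_mu_right]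
    _ = g x := by simp

section Complex

variable {V : Type*} [DecidableEq V]

theorem mem_simplexOf {x a : Finset V} : a ∈ simplexOf x ↔ a ⊆ x ∧ a.Nonempty := by
  simp [simplexOf, nonempty_iff_ne_empty, and_comm]

theorem boundaryOf_eq_erase_simplexOf (x : Finset V) : boundaryOf x = (simplexOf x).erase x :=
  rfl

theorem isComplex_simplexOf (x : Finset V) : IsComplex (simplexOf x) :=
  ⟨fun _ ha => (mem_simplexOf.1 ha).2, fun _ ha _ hba hb =>
    mem_simplexOf.2 ⟨hba.trans (mem_simplexOf.1 ha).1, hb⟩⟩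

theorem isComplex_boundaryOf (x : Finset V) : IsComplex (boundaryOf x) := by
  refine ⟨fun a ha => (mem_simplexOf.1 (mem_of_mem_erase ha)).2, fun a ha b hba hb => ?_⟩
  obtain ⟨hax, hax'⟩ := mem_erase.1 ha
  refine mem_erase.2 ⟨?_, (isComplex_simplexOf x).2 a hax' b hba hb⟩
  rintro rfl
  exact hax (hba.antisymm (mem_simplexOf.1 hax').1).symm

theorem IsComplex.simplexOf_subset {A : Finset (Finset V)} (hA : IsComplex A) {x : Finset V}
    (hx : x ∈ A) : simplexOf x ⊆ A := fun a ha =>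
  hA.2 x hx a (mem_simplexOf.1 ha).1 (mem_simplexOf.1 ha).2

theorem IsComplex.erase {A : Finset (Finset V)} (hA : IsComplex A) {x : Finset V}
    (hmax : ∀ a ∈ A, ¬x ⊂ a) : IsComplex (A.erase x) := by
  refine ⟨fun a ha => hA.1 a (mem_of_mem_erase ha), fun a ha b hba hb => ?_⟩
  obtain ⟨hax, haA⟩ := mem_erase.1 ha
  refine mem_erase.2 ⟨?_, hA.2 a haA b hba hb⟩
  rintro rfl
  exact hmax a haA (ssubset_of_subset_of_ne hba (Ne.symm hax))

theorem IsSubcomplex.of_subset {X A B : Finset (Finset V)} (hA : IsSubcomplex X A) (hBA : B ⊆ A)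
    (hB : IsComplex B) : IsSubcomplex X B :=
  ⟨hBA.trans hA.1, hB⟩

theorem erase_union_simplexOf {A : Finset (Finset V)} {x : Finset V} (hx : x.Nonempty)
    (hsub : simplexOf x ⊆ A) : A.erase x ∪ simplexOf x = A := by
  rw [erase_union_of_mem (mem_simplexOf.2 ⟨subset_rfl, hx⟩), union_eq_left.2 hsub]

theorem erase_inter_simplexOf {A : Finset (Finset V)} {x : Finset V} (hsub : simplexOf x ⊆ A) :
    A.erase x ∩ simplexOf x = boundaryOf x := by
  rw [boundaryOf_eq_erase_simplexOf, erase_inter, inter_eq_right.2 hsub]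

end Complex

section Valuation

variable {V G : Type*} [DecidableEq V] [AddCommGroup G]

def IsValuation (X : Finset (Finset V)) (μ : Finset (Finset V) → G) : Prop :=
  μ ∅ = 0 ∧ ∀ A B, IsSubcomplex X A → IsSubcomplex X B → μ (A ∪ B) = μ A + μ B - μ (A ∩ B)

theorem isValuation_sum (X : Finset (Finset V)) (f : Finset V → G) :
    IsValuation X fun A => ∑ a ∈ A, f a :=
  ⟨sum_empty, fun A B _ _ => eq_sub_of_add_eq (sum_union_inter (s₁ := A) (s₂ := B))⟩

theorem IsValuation.eq_of_eqOn_simplexOf {X : Finset (Finset V)} {μ ν : Finset (Finset V) → G}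
    (hμ : IsValuation X μ) (hν : IsValuation X ν)
    (h : ∀ x ∈ X, μ (simplexOf x) = ν (simplexOf x)) {A : Finset (Finset V)}
    (hA : IsSubcomplex X A) : μ A = ν A := by
  induction hcard : #A using Nat.strong_induction_on generalizing A with
  | _ n ih =>
  obtain rfl | hne := A.eq_empty_or_nonempty
  · rw [hμ.1, hν.1]
  obtain ⟨x, hxA, hmax⟩ := exists_max_image A card hne
  have hsub := hA.2.simplexOf_subset hxA
  have hrest : IsSubcomplex X (A.erase x) := hA.of_subset (erase_subset x A)
    (hA.2.erase fun a ha hxa => (card_lt_card hxa).not_ge (hmax a ha))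
  have hsimplex : IsSubcomplex X (simplexOf x) := hA.of_subset hsub (isComplex_simplexOf x)
  have hbd : IsSubcomplex X (boundaryOf x) :=
    hsimplex.of_subset (erase_subset x _) (isComplex_boundaryOf x)
  have hinter := erase_inter_simplexOf hsub
  have hlt : #(A.erase x) < n := hcard ▸ card_erase_lt_of_mem hxA
  have hlt' : #(boundaryOf x) < n := (card_le_card (hinter ▸ inter_subset_left)).trans_lt hlt
  rw [← erase_union_simplexOf (hA.2.1 x hxA) hsub, hμ.2 _ _ hrest hsimplex,
    hν.2 _ _ hrest hsimplex, hinter, ih _ hlt hrest rfl, ih _ hlt' hbd rfl, h x (hA.1 hxA)]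

end Valuation

theorem exists_sum_simplexOf_eq {V R : Type*} [DecidableEq V] [Ring R] (v : Finset V → R) :
    ∃ μ₀ : Finset V → R, ∀ x : Finset V, x.Nonempty → ∑ a ∈ simplexOf x, μ₀ a = v x := by
  -- `simplexOf x` omits `∅`, so the inverted function must vanish at `∅`.
  obtain ⟨μ₀, hμ₀⟩ := exists_sum_Iic_eq (Function.update v ∅ 0)
  refine ⟨μ₀, fun x hx => ?_⟩
  have hbot : μ₀ ∅ = 0 := by simpa [Iic_eq_powerset] using hμ₀ ∅
  rw [← add_zero (∑ a ∈ simplexOf x, μ₀ a), ← hbot, simplexOf,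
    sum_erase_add _ _ (empty_mem_powerset x), ← Iic_eq_powerset, hμ₀,
    Function.update_of_ne hx.ne_empty]

/-- given an arbitrary assignment `v` of real values to the simplices
of `X`, there is a (unique) valuation `μ` on subcomplexes taking value `v x` on each
simplex; explicitly `μ A = ∑_{a ∈ A} μ₀ a` where `μ₀` satisfies
`v x = ∑_{a ⊆ x} μ₀ a` (Möbius inversion). -/
theorem stmt1 {V : Type*} [DecidableEq V] (X : Finset (Finset V)) (hX : IsComplex X)
    (v : Finset V → ℝ) :
    ∃ μ₀ : Finset V → ℝ,
      (∀ x ∈ X, v x = ∑ a ∈ simplexOf x, μ₀ a) ∧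
      (∑ a ∈ (∅ : Finset (Finset V)), μ₀ a) = 0 ∧
      (∀ A B, IsSubcomplex X A → IsSubcomplex X B →
        (∑ a ∈ A ∪ B, μ₀ a) = (∑ a ∈ A, μ₀ a) + (∑ a ∈ B, μ₀ a) - ∑ a ∈ A ∩ B, μ₀ a) ∧
      (∀ x ∈ X, (∑ a ∈ simplexOf x, μ₀ a) = v x) ∧
      (∀ μ' : Finset (Finset V) → ℝ, μ' ∅ = 0 →
        (∀ A B, IsSubcomplex X A → IsSubcomplex X B →
          μ' (A ∪ B) = μ' A + μ' B - μ' (A ∩ B)) →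
        (∀ x ∈ X, μ' (simplexOf x) = v x) →
        ∀ A, IsSubcomplex X A → μ' A = ∑ a ∈ A, μ₀ a) := by
  obtain ⟨μ₀, hμ₀⟩ := exists_sum_simplexOf_eq v
  have hsimplex : ∀ x ∈ X, ∑ a ∈ simplexOf x, μ₀ a = v x := fun x hx => hμ₀ x (hX.1 x hx)
  have hsum : IsValuation X fun A => ∑ a ∈ A, μ₀ a := isValuation_sum X μ₀
  refine ⟨μ₀, fun x hx => (hsimplex x hx).symm, hsum.1, hsum.2, hsimplex,
    fun μ' h0 hμ' hv A hA => ?_⟩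
  exact IsValuation.eq_of_eqOn_simplexOf ⟨h0, hμ'⟩ hsum
    (fun x hx => (hv x hx).trans (hsimplex x hx).symm) hA
end

section
/- Hopf trace theorem: let C_* be a finite chain complex of finite-dimensional vector spaces over a field, and φ_* : C_* → C_* a chain map (commuting with the boundary operators). Then Σ_q (−1)^q tr(φ_q : C_q → C_q) = Σ_q (−1)^q tr(φ_{*q} : H_q(C) → H_q(C)), where H_q(C) denotes homology. -/
/-!
In each degree `q`, let `Z_q = ker d_q` and `B_q = im d_{q+1}`; both are `φ`-stable. The trace
is additive along invariant subspaces, and `C_q / Z_q ≅ B_{q-1}`, `Z_q / B_q ≅ H_q` compatibly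
with `φ`, so `tr φ_q = tr(φ|B_q) + tr φ_{*q} + tr(φ|B_{q-1})`. In the alternating sum the
boundary terms telescope, and they vanish at both ends of the complex.
-/

open LinearMap CategoryTheory

namespace LinearMap

variable {k V W : Type*} [Field k] [AddCommGroup V] [Module k V] [AddCommGroup W] [Module k W]

theorem mapsTo_ker_of_comp_eq {d : V →ₗ[k] W} {f : V →ₗ[k] V} {g : W →ₗ[k] W}
    (h : g ∘ₗ d = d ∘ₗ f) : ∀ x ∈ ker d, f x ∈ ker d := by
  intro x hx
  rw [mem_ker] at hx ⊢
  simpa [hx] using (LinearMap.congr_fun h x).symm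

theorem mapsTo_range_of_comp_eq {d : V →ₗ[k] W} {f : V →ₗ[k] V} {g : W →ₗ[k] W}
    (h : g ∘ₗ d = d ∘ₗ f) : ∀ y ∈ range d, g y ∈ range d := by
  rintro _ ⟨x, rfl⟩
  exact ⟨f x, (LinearMap.congr_fun h x).symm⟩

theorem trace_eq_of_comp_linearEquiv (e : V ≃ₗ[k] W) {f : V →ₗ[k] V} {g : W →ₗ[k] W}
    (h : g ∘ₗ e = e ∘ₗ f) : trace k W g = trace k V f := by
  rw [← trace_conj' f e]
  congr 1
  ext w
  simpa using LinearMap.congr_fun h (e.symm w)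

theorem trace_eq_trace_restrict_add_trace_mapQ [FiniteDimensional k V] (p : Submodule k V)
    (f : V →ₗ[k] V) (hf : ∀ x ∈ p, f x ∈ p) :
    trace k V f = trace k p (f.restrict hf) + trace k (V ⧸ p) (p.mapQ p f hf) := by
  -- A section `s` of `V → V ⧸ p` splits `id_V = i ∘ r + s ∘ π`; then use cyclicity of the trace.
  obtain ⟨s, hs⟩ := p.mkQ.exists_rightInverse_of_surjective p.range_mkQ
  have hs' : ∀ y, Submodule.Quotient.mk (s y) = y := fun y => LinearMap.congr_fun hs y
  let r : V →ₗ[k] p := (LinearMap.id - s ∘ₗ p.mkQ).codRestrict p fun v => by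
    simp [← Submodule.Quotient.mk_eq_zero, hs']
  have hsplit : p.subtype ∘ₗ r + s ∘ₗ p.mkQ = LinearMap.id := by
    ext v
    exact sub_add_cancel v (s (Submodule.Quotient.mk v))
  have hrestrict : r ∘ₗ f ∘ₗ p.subtype = f.restrict hf := by
    ext x
    show f x - s (Submodule.Quotient.mk (f x)) = f x
    simp [(Submodule.Quotient.mk_eq_zero p).2 (hf x x.2)]
  have hmapQ : p.mkQ ∘ₗ f ∘ₗ s = p.mapQ p f hf := by
    refine LinearMap.ext fun y => ?_
    conv_rhs => rw [← hs' y]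
    simp
  calc trace k V f = trace k V ((f ∘ₗ p.subtype) ∘ₗ r) + trace k V ((f ∘ₗ s) ∘ₗ p.mkQ) := by
        rw [← map_add, comp_assoc, comp_assoc, ← comp_add, hsplit, comp_id]
    _ = _ := by rw [trace_comp_comm' r, trace_comp_comm' p.mkQ, hrestrict, hmapQ]

theorem trace_eq_trace_restrict_ker_add_trace_restrict_range [FiniteDimensional k V]
    (d : V →ₗ[k] W) {f : V →ₗ[k] V} {g : W →ₗ[k] W} (h : g ∘ₗ d = d ∘ₗ f)
    (hf : ∀ x ∈ ker d, f x ∈ ker d) (hg : ∀ y ∈ range d, g y ∈ range d) :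
    trace k V f = trace k (ker d) (f.restrict hf) + trace k (range d) (g.restrict hg) := by
  rw [trace_eq_trace_restrict_add_trace_mapQ (ker d) f hf,
    trace_eq_of_comp_linearEquiv d.quotKerEquivRange (g := g.restrict hg)]
  ext x
  simpa using LinearMap.congr_fun h x

theorem trace_restrict_eq_of_range_eq {A : Type*} [AddCommGroup A] [Module k A]
    (i : A →ₗ[k] V) (hi : Function.Injective i) {p : Submodule k V} (hp : range i = p)
    {f : V →ₗ[k] V} (hf : ∀ x ∈ p, f x ∈ p) {h : A →ₗ[k] A} (hc : f ∘ₗ i = i ∘ₗ h) :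
    trace k p (f.restrict hf) = trace k A h := by
  subst hp
  refine trace_eq_of_comp_linearEquiv (LinearEquiv.ofInjective i hi) ?_
  ext a
  simpa using LinearMap.congr_fun hc a

end LinearMap

namespace CategoryTheory.ShortComplex

variable {k : Type*} [Field k] {S : ShortComplex (ModuleCat k)} (ψ : S ⟶ S)

theorem τ₂_comp_f : ψ.τ₂.hom ∘ₗ S.f.hom = S.f.hom ∘ₗ ψ.τ₁.hom :=
  congrArg ModuleCat.Hom.hom ψ.comm₁₂.symm

theorem τ₃_comp_g : ψ.τ₃.hom ∘ₗ S.g.hom = S.g.hom ∘ₗ ψ.τ₂.hom :=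
  congrArg ModuleCat.Hom.hom ψ.comm₂₃.symm

theorem restrict_τ₂_comp_moduleCatToCycles :
    ψ.τ₂.hom.restrict (mapsTo_ker_of_comp_eq (τ₃_comp_g ψ)) ∘ₗ S.moduleCatToCycles
      = S.moduleCatToCycles ∘ₗ ψ.τ₁.hom := by
  ext x
  exact LinearMap.congr_fun (τ₂_comp_f ψ) x

noncomputable def moduleCatLeftHomologyMapData :
    LeftHomologyMapData ψ S.moduleCatLeftHomologyData S.moduleCatLeftHomologyData where
  φK := ModuleCat.ofHom (ψ.τ₂.hom.restrict (mapsTo_ker_of_comp_eq (τ₃_comp_g ψ)))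
  φH := ModuleCat.ofHom ((range S.moduleCatToCycles).mapQ _ _
    (mapsTo_range_of_comp_eq (restrict_τ₂_comp_moduleCatToCycles ψ)))
  commi := by ext; rfl
  commf' := by ext x; exact Subtype.ext (LinearMap.congr_fun (τ₂_comp_f ψ) x)
  commπ := by ext; rfl

theorem trace_homologyMap :
    trace k S.homology (homologyMap ψ).hom
      = trace k S.moduleCatLeftHomologyData.H (moduleCatLeftHomologyMapData ψ).φH.hom :=
  (trace_eq_of_comp_linearEquiv S.moduleCatLeftHomologyData.homologyIso.toLinearEquiv
    (congrArg ModuleCat.Hom.hom (moduleCatLeftHomologyMapData ψ).homologyMap_comm.symm)).symm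

theorem trace_τ₂ [FiniteDimensional k S.X₂] :
    trace k S.X₂ ψ.τ₂.hom
      = trace k (range S.f.hom) (ψ.τ₂.hom.restrict (mapsTo_range_of_comp_eq (τ₂_comp_f ψ)))
        + trace k S.homology (homologyMap ψ).hom
        + trace k (range S.g.hom) (ψ.τ₃.hom.restrict (mapsTo_range_of_comp_eq (τ₃_comp_g ψ))) := by
  have hB := mapsTo_range_of_comp_eq (restrict_τ₂_comp_moduleCatToCycles ψ)
  have hi : Function.Injective ((ker S.g.hom).subtype ∘ₗ (range S.moduleCatToCycles).subtype) :=
    (ker S.g.hom).injective_subtype.comp (range S.moduleCatToCycles).injective_subtype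
  have hrange : range ((ker S.g.hom).subtype ∘ₗ (range S.moduleCatToCycles).subtype)
      = range S.f.hom := by
    rw [range_comp, Submodule.range_subtype, ← range_comp]
    rfl
  rw [trace_eq_trace_restrict_ker_add_trace_restrict_range S.g.hom (τ₃_comp_g ψ)
      (mapsTo_ker_of_comp_eq (τ₃_comp_g ψ)) (mapsTo_range_of_comp_eq (τ₃_comp_g ψ)),
    trace_eq_trace_restrict_add_trace_mapQ _ _ hB, trace_homologyMap,
    trace_restrict_eq_of_range_eq _ hi hrange _ (h := (ψ.τ₂.hom.restrict _).restrict hB) rfl]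
  rfl

end CategoryTheory.ShortComplex

namespace HomologicalComplex

variable {k ι : Type*} [Field k] {c : ComplexShape ι} {C : HomologicalComplex (ModuleCat k) c}
  (φ : C ⟶ C)

theorem f_comp_d (i j : ι) : (φ.f j).hom ∘ₗ (C.d i j).hom = (C.d i j).hom ∘ₗ (φ.f i).hom :=
  congrArg ModuleCat.Hom.hom (φ.comm i j).symm

noncomputable def boundaryTrace (i j : ι) : k :=
  trace k (range (C.d i j).hom) ((φ.f j).hom.restrict (mapsTo_range_of_comp_eq (f_comp_d φ i j)))

theorem boundaryTrace_eq_zero_of_d_eq_zero {i j : ι} (h : C.d i j = 0) :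
    boundaryTrace φ i j = 0 := by
  have : Subsingleton (range (C.d i j).hom) := by
    rw [h, ModuleCat.hom_zero, range_zero]
    infer_instance
  rw [boundaryTrace, Subsingleton.elim ((φ.f j).hom.restrict _) 0, map_zero]

theorem trace_f_eq (j : ι) [FiniteDimensional k (C.X j)] :
    trace k (C.X j) (φ.f j).hom
      = boundaryTrace φ (c.prev j) j + trace k (C.homology j) (homologyMap φ j).hom
        + boundaryTrace φ j (c.next j) :=
  have : FiniteDimensional k ((shortComplexFunctor _ c j).obj C).X₂ := ‹_›
  ShortComplex.trace_τ₂ ((shortComplexFunctor _ _ j).map φ)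

end HomologicalComplex

open HomologicalComplex in
/-- Hopf trace theorem: for a bounded chain complex `C` of
finite-dimensional vector spaces over a field `k` and a chain map `φ : C ⟶ C`,
the alternating sum of the traces of `φ` on the chain groups equals the
alternating sum of the traces of the induced maps on homology. -/
theorem stmt9 (k : Type) [Field k] (C : ChainComplex (ModuleCat k) ℕ)
    (N : ℕ) (hfin : ∀ q, FiniteDimensional k (C.X q))
    (hbd : ∀ q, N ≤ q → Subsingleton (C.X q))
    (φ : C ⟶ C) :
    ∑ q ∈ Finset.range N, (-1 : k) ^ q * LinearMap.trace k (C.X q) (φ.f q).hom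
      = ∑ q ∈ Finset.range N,
          (-1 : k) ^ q * LinearMap.trace k (C.homology q) (homologyMap φ q).hom := by
  set b : ℕ → k := fun q => boundaryTrace φ q ((ComplexShape.down ℕ).next q)
  have hdeg : ∀ q, trace k (C.X q) (φ.f q).hom
      = trace k (C.homology q) (homologyMap φ q).hom + (b (q + 1) + b q) := fun q => by
    have := hfin q
    rw [trace_f_eq, ChainComplex.prev]
    simp only [b, ChainComplex.next_nat_succ]
    ring
  have hb0 : b 0 = 0 :=
    boundaryTrace_eq_zero_of_d_eq_zero φ (C.shape _ _ (by simp))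
  have hbN : b N = 0 := by
    have := hbd N le_rfl
    exact boundaryTrace_eq_zero_of_d_eq_zero φ (ModuleCat.hom_ext (Subsingleton.elim _ _))
  have htel : ∑ q ∈ Finset.range N, (-1 : k) ^ q * (b (q + 1) + b q) = 0 := by
    calc _ = ∑ q ∈ Finset.range N, (-(-1 : k) ^ (q + 1) * b (q + 1) - -(-1 : k) ^ q * b q) :=
          Finset.sum_congr rfl fun q _ => by ring
      _ = 0 := by rw [Finset.sum_range_sub (fun q => -(-1 : k) ^ q * b q), hb0, hbN]; ring
  calc _ = ∑ q ∈ Finset.range N, (-1 : k) ^ q * trace k (C.homology q) (homologyMap φ q).hom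
          + ∑ q ∈ Finset.range N, (-1 : k) ^ q * (b (q + 1) + b q) := by
        rw [← Finset.sum_add_distrib]
        exact Finset.sum_congr rfl fun q _ => by rw [hdeg]; ring
    _ = _ := by rw [htel, add_zero]
end

section
/- Let f : X → X be a simplicial map on a finite simplicial complex such that the geometric realization |f| has no fixed points on the geometric realization of a subcomplex A. Then c(f, ρ) = 0 for every face ρ of A, and consequently L(f, A) = 0, where L(f, A) = Σ_{ρ ∈ A} (−1)^{dim ρ} c(f, ρ). -/
/-- The orientation coefficient `c(f,ρ)`: the coefficient of the oriented simplex
`ρ` in the chain `f_q(ρ)`.  It is nonzero exactly when `f` maps `ρ` onto itself,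
in which case it is the sign of the induced permutation of the vertices of `ρ`. -/
noncomputable def coeff {V : Type*} [DecidableEq V] (f : V → V) (ρ : Finset V) : ℤ :=
  if h : ρ.image f = ρ then
    haveI : Fintype ↥(↑ρ : Set V) := FinsetCoe.fintype ρ
    Equiv.Perm.sign (Equiv.ofBijective
      (fun v : {v // v ∈ ρ} => (⟨f v, by
        have := Finset.mem_image_of_mem f v.2
        rwa [h] at this⟩ : {v // v ∈ ρ}))
      (Finite.surjective_iff_bijective.mp (by
        rintro ⟨y, hy⟩
        rw [← h] at hy
        obtain ⟨v, hv, hfv⟩ := Finset.mem_image.mp hy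
        exact ⟨⟨v, hv⟩, Subtype.ext hfv⟩)))
  else 0

/-- The geometric realization `|A|` of a complex `A`, as a subset of `V → ℝ`:
convex combinations of the vertices of a face of `A`. -/
def geomReal {V : Type*} [DecidableEq V] (A : Finset (Finset V)) : Set (V → ℝ) :=
  {p | ∃ ρ ∈ A, (∀ v, 0 ≤ p v) ∧ (∀ v, p v ≠ 0 → v ∈ ρ) ∧ ∑ v ∈ ρ, p v = 1}

/-- The geometric realization `|f|` of a simplicial map `f`: the affine extension
of the vertex map, pushing barycentric coordinates forward along `f`. -/
noncomputable def geomMap {V : Type*} [DecidableEq V] [Fintype V]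
    (f : V → V) (p : V → ℝ) : V → ℝ :=
  fun w => ∑ v ∈ Finset.univ.filter (fun v => f v = w), p v

/-- if `f : X → X` is a simplicial map whose geometric realization
`|f|` has no fixed points on the geometric realization `|A|` of a subcomplex `A`,
then `c(f,ρ) = 0` for every face `ρ` of `A`, and consequently
`L(f,A) = ∑_{ρ ∈ A} (−1)^{dim ρ} c(f,ρ) = 0`. -/
theorem stmt11 {V : Type*} [DecidableEq V] [Fintype V]
    (X : Finset (Finset V)) (hX : IsComplex X)
    (f : V → V) (hf : ∀ ρ ∈ X, ρ.image f ∈ X)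
    (A : Finset (Finset V)) (hA : IsSubcomplex X A)
    (hfix : ∀ p ∈ geomReal A, geomMap f p ≠ p) :
    (∀ ρ ∈ A, coeff f ρ = 0) ∧
    (∑ ρ ∈ A, (-1 : ℝ) ^ (ρ.card + 1) * (coeff f ρ : ℝ)) = 0 := by
  have key : ∀ ρ ∈ A, coeff f ρ = 0 := by
    intro ρ hρ
    unfold coeff
    split_ifs with h
    · -- f permutes the vertices of ρ; the barycenter is a fixed point
      exfalso
      have hne : ρ.Nonempty := hA.2.1 ρ hρ
      have hcard : (ρ.card : ℝ) ≠ 0 := by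
        exact_mod_cast Finset.card_ne_zero_of_mem hne.choose_spec
      set p : V → ℝ := fun v => if v ∈ ρ then (ρ.card : ℝ)⁻¹ else 0 with hp
      have hinj : Set.InjOn f ρ := by
        have := Finset.card_image_of_injOn (s := ρ) (f := f)
        have hc : (ρ.image f).card = ρ.card := by rw [h]
        exact Finset.injOn_of_card_image_eq hc
      have hmem : p ∈ geomReal A := by
        refine ⟨ρ, hρ, ?_, ?_, ?_⟩
        · intro v
          simp only [hp]
          split_ifs
          · positivity
          · exact le_rfl
        · intro v hv
          by_contra hvρ
          apply hv
          simp [hp, hvρ]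
        · simp only [hp]
          rw [Finset.sum_ite_of_true (fun v hv => hv), Finset.sum_const, nsmul_eq_mul]
          field_simp
      apply hfix p hmem
      funext w
      unfold geomMap
      have hsub : Finset.univ.filter (fun v => f v = w) ∩ ρ
          = ρ.filter (fun v => f v = w) := by
        ext v; simp [Finset.mem_filter, and_comm]
      have hsum : ∑ v ∈ Finset.univ.filter (fun v => f v = w), p v
          = ∑ v ∈ ρ.filter (fun v => f v = w), (ρ.card : ℝ)⁻¹ := by
        rw [← hsub]
        rw [Finset.sum_ite_mem]
      rw [hsum, Finset.sum_const, nsmul_eq_mul]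
      by_cases hw : w ∈ ρ
      · have : ρ.filter (fun v => f v = w) = {(Finset.mem_image.mp (h ▸ hw)).choose} := by
          obtain ⟨hv1, hv2⟩ := (Finset.mem_image.mp (h ▸ hw)).choose_spec
          ext u
          simp only [Finset.mem_filter, Finset.mem_singleton]
          constructor
          · rintro ⟨hu, hfu⟩
            exact hinj hu hv1 (by rw [hfu, hv2])
          · rintro rfl
            exact ⟨hv1, hv2⟩
        rw [this, Finset.card_singleton]
        simp [hp, hw]
      · have : ρ.filter (fun v => f v = w) = ∅ := by
          ext u
          simp only [Finset.mem_filter, Finset.notMem_empty, iff_false, not_and]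
          rintro hu rfl
          exact hw (h ▸ Finset.mem_image_of_mem f hu)
        rw [this]
        simp [hp, hw]
    · rfl
  refine ⟨key, ?_⟩
  apply Finset.sum_eq_zero
  intro ρ hρ
  rw [key ρ hρ]
  simp
end

section
/- Let f : X → X be a simplicial map whose geometric realization has all its fixed points in the interiors of maximal simplices (a Hopf simplicial map). Then for any simplex x̄ that is not maximal, L(f, x̄) = 0, where L(f, A) = Σ_{ρ ∈ A} (−1)^{dim ρ} c(f, ρ); and for a maximal simplex x̄, L(f, x̄) = (−1)^{dim X} c(f, x). -/
/-- A maximal face of `X`. -/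
def IsMaximalFace {V : Type*} [DecidableEq V] (X : Finset (Finset V)) (ρ : Finset V) : Prop :=
  ρ ∈ X ∧ ∀ σ ∈ X, ρ ⊆ σ → σ = ρ

/-- The open geometric simplex of a face `ρ`: points whose support is exactly `ρ`. -/
def openCell {V : Type*} [DecidableEq V] (ρ : Finset V) : Set (V → ℝ) :=
  {p | (∀ v, 0 ≤ p v) ∧ (∀ v, p v ≠ 0 ↔ v ∈ ρ) ∧ ∑ v ∈ ρ, p v = 1}

/-- If `f` maps a face `ρ` of `X` onto itself, the barycenter of `ρ` is a fixed
point of `|f|`; by the Hopf condition `ρ` must be maximal. -/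
lemma key_maximal {V : Type*} [DecidableEq V] [Fintype V]
    (X : Finset (Finset V)) (hX : IsComplex X) (f : V → V)
    (hHopf : ∀ p ∈ geomReal X, geomMap f p = p →
      ∃ σ, IsMaximalFace X σ ∧ p ∈ openCell σ)
    (ρ : Finset V) (hρ : ρ ∈ X) (him : ρ.image f = ρ) : IsMaximalFace X ρ := by
  have hne : ρ.Nonempty := hX.1 ρ hρ
  have hcard : (0 : ℝ) < ρ.card := by exact_mod_cast Finset.card_pos.mpr hne
  set c : ℝ := (ρ.card : ℝ)⁻¹ with hc
  have hcpos : 0 < c := by positivity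
  set p : V → ℝ := fun v => if v ∈ ρ then c else 0 with hp
  have hsum : ∀ s : Finset V, ∑ v ∈ s, p v = (s ∩ ρ).card * c := by
    intro s
    rw [hp]
    rw [Finset.sum_ite_mem, Finset.sum_const, nsmul_eq_mul]
  have hinj : Set.InjOn f ρ := by
    apply Finset.injOn_of_card_image_eq
    rw [him]
  have hsum1 : ∑ v ∈ ρ, p v = 1 := by
    rw [hsum, Finset.inter_self, hc, mul_inv_cancel₀ hcard.ne']
  have hpmem : p ∈ geomReal X := by
    refine ⟨ρ, hρ, ?_, ?_, hsum1⟩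
    · intro v; by_cases h : v ∈ ρ <;> simp [hp, h, hcpos.le]
    · intro v hv; by_contra h; exact hv (if_neg h)
  have hfix : geomMap f p = p := by
    funext w
    show ∑ v ∈ Finset.univ.filter (fun v => f v = w), p v = p w
    rw [hsum]
    have : Finset.univ.filter (fun v => f v = w) ∩ ρ = ρ.filter (fun v => f v = w) := by
      ext v; simp [and_comm]
    rw [this]
    by_cases hw : w ∈ ρ
    · have hw' : w ∈ ρ.image f := by rw [him]; exact hw
      obtain ⟨v₀, hv₀, hfv₀⟩ := Finset.mem_image.mp hw'
      have : ρ.filter (fun v => f v = w) = {v₀} := by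
        ext v
        simp only [Finset.mem_filter, Finset.mem_singleton]
        constructor
        · rintro ⟨hv, hfv⟩
          exact hinj hv hv₀ (hfv.trans hfv₀.symm)
        · rintro rfl; exact ⟨hv₀, hfv₀⟩
      rw [this]
      simp [hp, hw]
    · have : ρ.filter (fun v => f v = w) = ∅ := by
        ext v
        simp only [Finset.mem_filter, Finset.notMem_empty, iff_false, not_and]
        intro hv hfv
        exact hw (hfv ▸ him ▸ Finset.mem_image_of_mem f hv)
      rw [this]
      simp [hp, hw]
  obtain ⟨σ, hσmax, hσ⟩ := hHopf p hpmem hfix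
  have : σ = ρ := by
    ext v
    rw [← hσ.2.1 v]
    constructor
    · intro h; by_contra h'; simp [hp, h'] at h
    · intro h; simp [hp, h]; exact hcpos.ne'
  exact this ▸ hσmax

/-- let `f : X → X` be a Hopf simplicial map: `X` is pure of
dimension `n = dim X` and all fixed points of `|f|` lie in the interiors of
maximal simplices.  Then `L(f, x̄) = 0` for every non-maximal simplex `x̄`, and
`L(f, x̄) = (−1)^{dim X} c(f,x)` for every maximal simplex `x̄`, where
`L(f, x̄) = ∑_{ρ ⊆ x} (−1)^{dim ρ} c(f,ρ)`. -/
theorem stmt13 {V : Type*} [DecidableEq V] [Fintype V]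
    (X : Finset (Finset V)) (hX : IsComplex X)
    (f : V → V) (hf : ∀ ρ ∈ X, ρ.image f ∈ X)
    (hpure : ∀ ρ, IsMaximalFace X ρ → ρ.card = X.sup Finset.card)
    (hHopf : ∀ p ∈ geomReal X, geomMap f p = p →
      ∃ ρ, IsMaximalFace X ρ ∧ p ∈ openCell ρ) :
    (∀ x ∈ X, ¬ IsMaximalFace X x →
      (∑ ρ ∈ simplexOf x, (-1 : ℝ) ^ (ρ.card + 1) * (coeff f ρ : ℝ)) = 0) ∧
    (∀ x ∈ X, IsMaximalFace X x →
      (∑ ρ ∈ simplexOf x, (-1 : ℝ) ^ (ρ.card + 1) * (coeff f ρ : ℝ))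
        = (-1 : ℝ) ^ (X.sup Finset.card + 1) * (coeff f x : ℝ)) := by
  have hzero : ∀ ρ ∈ X, ¬ IsMaximalFace X ρ → coeff f ρ = 0 := by
    intro ρ hρ hmax
    rw [coeff]
    rw [dif_neg]
    intro him
    exact hmax (key_maximal X hX f hHopf ρ hρ him)
  have hmem : ∀ x : Finset V, ∀ ρ ∈ simplexOf x, ρ ⊆ x ∧ ρ.Nonempty := by
    intro x ρ hρ
    simp only [simplexOf, Finset.mem_erase, Finset.mem_powerset] at hρ
    exact ⟨hρ.2, Finset.nonempty_iff_ne_empty.mpr hρ.1⟩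
  constructor
  · intro x hx hxmax
    apply Finset.sum_eq_zero
    intro ρ hρ
    obtain ⟨hsub, hne⟩ := hmem x ρ hρ
    have hρX : ρ ∈ X := hX.2 x hx ρ hsub hne
    have : ¬ IsMaximalFace X ρ := by
      intro hρmax
      exact hxmax (hρmax.2 x hx hsub ▸ hρmax)
    rw [hzero ρ hρX this]
    simp
  · intro x hx hxmax
    have hxmem : x ∈ simplexOf x := by
      simp only [simplexOf, Finset.mem_erase, Finset.mem_powerset]
      exact ⟨Finset.nonempty_iff_ne_empty.mp (hX.1 x hx), Finset.Subset.refl x⟩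
    rw [Finset.sum_eq_single x]
    · rw [hpure x hxmax]
    · intro ρ hρ hρx
      obtain ⟨hsub, hne⟩ := hmem x ρ hρ
      have hρX : ρ ∈ X := hX.2 x hx ρ hsub hne
      have : ¬ IsMaximalFace X ρ := by
        intro hρmax
        exact hρx ((hρmax.2 x hx hsub).symm)
      rw [hzero ρ hρX this]
      simp
    · intro h; exact absurd hxmem h
end
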